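/- arXiv:1212.1803 — 3 statements merged into one kernel-verified Lean document; each statement's English description precedes it below -/
import Mathlib

section
/- A nonconstant affine map ℝ^d → ℝ^n cannot map a point lying in the interior of the convex hull of a finite set S ⊂ ℝ^d onto a sphere together with S; more precisely, if x lies in the interior of the convex hull of S and f is an affine map with f(S ∪ {x}) contained in a sphere of ℝ^n, then f is constant. -/
/-!
The function `y ↦ dist (f y) c` is convex, so on `convexHull S` it is bounded by its value `r`
on `S`; since it also equals `r` at `x`, it has a local maximum at the interior point `x`.
Along every line through `x` the images of `x + w` and `x - w` have midpoint `f x`, and by the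
parallelogram law they cannot both lie in the closed ball of radius `‖f x - c‖` unless
`f.linear w = 0`.
-/

open Filter Topology

theorem eq_zero_of_norm_add_le_of_norm_sub_le {F : Type*} [NormedAddCommGroup F]
    [InnerProductSpace ℝ F] {p q : F} (h₁ : ‖p + q‖ ≤ ‖p‖) (h₂ : ‖p - q‖ ≤ ‖p‖) : q = 0 := by
  have hpar := parallelogram_law_with_norm ℝ p q
  have hq : ‖q‖ ^ 2 ≤ 0 := by
    nlinarith [norm_nonneg (p + q), norm_nonneg (p - q), norm_nonneg p]
  exact norm_eq_zero.mp (pow_eq_zero_iff two_ne_zero |>.mp (le_antisymm hq (sq_nonneg _)))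

theorem AffineMap.linear_eq_zero_of_isLocalMax_dist {E F : Type*} [NormedAddCommGroup E]
    [NormedSpace ℝ E] [NormedAddCommGroup F] [InnerProductSpace ℝ F] (f : E →ᵃ[ℝ] F) {c : F}
    {x : E} (h : IsLocalMax (fun y => dist (f y) c) x) : f.linear = 0 := by
  ext v
  have hf : ∀ w : E, f (x + w) - c = (f x - c) + f.linear w := fun w => by
    rw [add_comm x, ← vadd_eq_add, f.map_vadd, vadd_eq_add]
    abel
  have hplus : Tendsto (fun t : ℝ => x + t • v) (𝓝 0) (𝓝 x) :=
    (show Continuous fun t : ℝ => x + t • v by fun_prop).tendsto' 0 x (by simp)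
  have hminus : Tendsto (fun t : ℝ => x - t • v) (𝓝 0) (𝓝 x) :=
    (show Continuous fun t : ℝ => x - t • v by fun_prop).tendsto' 0 x (by simp)
  obtain ⟨t, ⟨hle₁, hle₂⟩, ht⟩ :=
    ((((hplus.eventually h).and (hminus.eventually h)).filter_mono nhdsWithin_le_nhds).and
      (self_mem_nhdsWithin (s := {0}ᶜ))).exists
  simp only [dist_eq_norm] at hle₁ hle₂
  rw [hf, map_smul] at hle₁
  rw [sub_eq_add_neg x, hf, map_neg, map_smul, ← sub_eq_add_neg] at hle₂
  have htv := eq_zero_of_norm_add_le_of_norm_sub_le hle₁ hle₂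
  exact (smul_eq_zero.mp htv).resolve_left ht

theorem stmt4_general (d n : ℕ) (S : Set (EuclideanSpace ℝ (Fin d)))
    (x : EuclideanSpace ℝ (Fin d)) (hx : x ∈ interior (convexHull ℝ S))
    (f : EuclideanSpace ℝ (Fin d) →ᵃ[ℝ] EuclideanSpace ℝ (Fin n))
    (hsphere : ∃ (c : EuclideanSpace ℝ (Fin n)) (r : ℝ), 0 < r ∧
      f '' (S ∪ {x}) ⊆ Metric.sphere c r) :
    ∀ y z, f y = f z := by
  obtain ⟨c, r, -, hsub⟩ := hsphere
  have hdist : ∀ y ∈ S ∪ {x}, dist (f y) c = r := fun y hy => hsub ⟨y, hy, rfl⟩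
  have hconvex : ConvexOn ℝ Set.univ (fun y => dist (f y) c) :=
    (convexOn_univ_dist c).comp_affineMap f
  have hmax : IsMaxOn (fun y => dist (f y) c) (convexHull ℝ S) x := fun y hy => by
    obtain ⟨s, hs, hys⟩ := hconvex.exists_ge_of_mem_convexHull (Set.subset_univ S) hy
    exact hys.trans ((hdist s (.inl hs)).trans (hdist x (.inr rfl)).symm).le
  have hlinear := f.linear_eq_zero_of_isLocalMax_dist
    (hmax.isLocalMax (mem_interior_iff_mem_nhds.mp hx))
  obtain ⟨q, rfl⟩ := (f.linear_eq_zero_iff_exists_const).mp hlinear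
  exact fun _ _ => rfl

/-- A nonconstant affine map `ℝ^d → ℝ^n` cannot map a point lying in the interior
of the convex hull of a finite set `S ⊂ ℝ^d` onto a sphere together with `S`:
if `x ∈ interior (convexHull S)` and `f` is affine with `f '' (S ∪ {x})` contained
in a sphere of `ℝ^n`, then `f` is constant. -/
theorem stmt4 (d n : ℕ) (S : Set (EuclideanSpace ℝ (Fin d))) (hS : S.Finite)
    (x : EuclideanSpace ℝ (Fin d)) (hx : x ∈ interior (convexHull ℝ S))
    (f : EuclideanSpace ℝ (Fin d) →ᵃ[ℝ] EuclideanSpace ℝ (Fin n))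
    (hsphere : ∃ (c : EuclideanSpace ℝ (Fin n)) (r : ℝ), 0 < r ∧
      f '' (S ∪ {x}) ⊆ Metric.sphere c r) :
    ∀ y z, f y = f z :=
  stmt4_general d n S x hx f hsphere
end

section
/- Let g_1, ..., g_{d+1} ∈ O(n). The set of α ∈ ℝ^d for which there exists b ∈ ℝ^n, not fixed by all g_k, with ∑_{k=1}^d α_k (g_k b − b) + b = g_{d+1} b, is either all of ℝ^d or is contained in the zero set of a nonzero polynomial in α_1, ..., α_d. -/
/-!
Writing `M α = (1 - g_{d+1}) + ∑ α_k (g_k - 1)`, the equation says `b ∈ ker (M α)`, and this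
kernel always contains the common fixed space `F` of the `g_k`. Hence `α` is in the set exactly
when `M α` is not injective on a complement `C` of `F`, i.e. when the Gram determinant
`det (Aᵀ A)` of the matrix `A` of `M α` restricted to `C` vanishes. The entries of `A` are affine
in `α`, so this determinant is a polynomial `p` in `α`, and the set is the zero set of `p`:
everything if `p = 0`, a proper algebraic set otherwise.
-/

open MvPolynomial Matrix LinearMap

theorem Matrix.exists_mulVec_eq_zero_iff_det_transpose_mul_self_eq_zero {K ι κ : Type*} [Field K]
    [LinearOrder K] [IsStrictOrderedRing K] [Fintype ι] [Fintype κ] [DecidableEq ι]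
    (B : Matrix κ ι K) : (∃ v ≠ 0, B *ᵥ v = 0) ↔ (Bᵀ * B).det = 0 := by
  have hker := SetLike.ext_iff.mp (ker_mulVecLin_transpose_mul_self B)
  simp only [mem_ker, mulVecLin_apply] at hker
  simp_rw [← exists_mulVec_eq_zero_iff, hker]

theorem MvPolynomial.exists_eval_eq_det_transpose_mul_self {R σ ι κ : Type*} [CommRing R]
    [Fintype σ] [Fintype ι] [Fintype κ] [DecidableEq ι] (A₀ : Matrix κ ι R)
    (A : σ → Matrix κ ι R) :
    ∃ p : MvPolynomial σ R, ∀ x : σ → R,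
      eval x p = ((A₀ + ∑ k, x k • A k)ᵀ * (A₀ + ∑ k, x k • A k)).det := by
  let P : Matrix κ ι (MvPolynomial σ R) := A₀.map C + ∑ k, (X k : MvPolynomial σ R) • (A k).map C
  refine ⟨(Pᵀ * P).det, fun x => ?_⟩
  have hP : P.map (eval x) = A₀ + ∑ k, x k • A k := by
    ext i j
    simp [P, Matrix.sum_apply]
  rw [RingHom.map_det, RingHom.mapMatrix_apply, Matrix.map_mul, Matrix.transpose_map, hP]

section

variable {R V W : Type*} [CommRing R] [AddCommGroup V] [Module R V] [AddCommGroup W] [Module R W]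

theorem LinearMap.exists_notMem_apply_eq_zero_iff_of_isCompl {F C : Submodule R V}
    (hFC : IsCompl F C) {f : V →ₗ[R] W} (hF : F ≤ ker f) :
    (∃ v ∉ F, f v = 0) ↔ ∃ c : C, c ≠ 0 ∧ f c = 0 := by
  constructor
  · rintro ⟨v, hvF, hfv⟩
    have hv : v ∈ F ⊔ C := hFC.sup_eq_top ▸ Submodule.mem_top
    obtain ⟨y, hy, z, hz, rfl⟩ := Submodule.mem_sup.mp hv
    refine ⟨⟨z, hz⟩, fun hz0 => hvF ?_, ?_⟩
    · simpa [show z = 0 from congrArg Subtype.val hz0] using hy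
    · simpa [mem_ker.mp (hF hy)] using hfv
  · rintro ⟨c, hc, hfc⟩
    refine ⟨c, fun hcF => hc ?_, hfc⟩
    exact Subtype.ext (Submodule.disjoint_def.mp hFC.disjoint c hcF c.2)

theorem LinearMap.exists_ne_zero_apply_eq_zero_iff_exists_toMatrix_mulVec_eq_zero {ι κ : Type*}
    [Fintype ι] [Finite κ] [DecidableEq ι] (e : Module.Basis ι R V) (b : Module.Basis κ R W)
    (f : V →ₗ[R] W) :
    (∃ v ≠ 0, f v = 0) ↔ ∃ w ≠ 0, toMatrix e b f *ᵥ w = 0 := by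
  have key (v : V) : toMatrix e b f *ᵥ e.equivFun v = b.equivFun (f v) := by
    simpa using toMatrix_mulVec_repr e b f v
  constructor
  · rintro ⟨v, hv, hfv⟩
    exact ⟨e.equivFun v, by simpa using hv, by rw [key, hfv, map_zero]⟩
  · rintro ⟨w, hw, hfw⟩
    obtain ⟨v, rfl⟩ := e.equivFun.surjective w
    exact ⟨v, by simpa using hw, by rwa [key, LinearEquiv.map_eq_zero_iff] at hfw⟩

end

section

variable {K V W : Type*} [Field K] [LinearOrder K] [IsStrictOrderedRing K]
  [AddCommGroup V] [Module K V] [FiniteDimensional K V]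

theorem exists_mvPolynomial_eval_eq_zero_iff_exists_notMem_ker [AddCommGroup W] [Module K W]
    [FiniteDimensional K W] {σ : Type*} [Fintype σ] (L₀ : V →ₗ[K] W) (L : σ → V →ₗ[K] W)
    {F : Submodule K V} (hF₀ : F ≤ ker L₀) (hF : ∀ k, F ≤ ker (L k)) :
    ∃ p : MvPolynomial σ K, ∀ x : σ → K,
      (∃ v ∉ F, (L₀ + ∑ k, x k • L k) v = 0) ↔ eval x p = 0 := by
  obtain ⟨C, hFC⟩ := F.exists_isCompl
  let A : (V →ₗ[K] W) →ₗ[K] Matrix _ _ K :=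
    (toMatrix (Module.finBasis K C) (Module.finBasis K W)).toLinearMap ∘ₗ lcomp K W C.subtype
  obtain ⟨p, hp⟩ := exists_eval_eq_det_transpose_mul_self (A L₀) (fun k => A (L k))
  refine ⟨p, fun x => ?_⟩
  have hker : F ≤ ker (L₀ + ∑ k, x k • L k) := fun v hv => by
    have hLv k : L k v = 0 := hF k hv
    simp [mem_ker.mp (hF₀ hv), hLv]
  have hA : A (L₀ + ∑ k, x k • L k) = A L₀ + ∑ k, x k • A (L k) := by
    simp only [map_add, map_sum, map_smul]
  rw [LinearMap.exists_notMem_apply_eq_zero_iff_of_isCompl hFC hker, hp, ← hA,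
    ← exists_mulVec_eq_zero_iff_det_transpose_mul_self_eq_zero]
  exact exists_ne_zero_apply_eq_zero_iff_exists_toMatrix_mulVec_eq_zero (Module.finBasis K C)
    (Module.finBasis K W) ((L₀ + ∑ k, x k • L k) ∘ₗ C.subtype)

theorem exists_mvPolynomial_eval_eq_zero_iff_exists_not_fixed {d : ℕ}
    (g : Fin (d + 1) → Module.End K V) :
    ∃ p : MvPolynomial (Fin d) K, ∀ α : Fin d → K,
      (∃ b, (∃ k, g k b ≠ b) ∧ ∑ k : Fin d, α k • (g k.castSucc b - b) + b = g (Fin.last d) b) ↔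
        eval α p = 0 := by
  let F := ⨅ k, ker (g k - 1)
  have hF k : F ≤ ker (g k - 1) := iInf_le _ k
  obtain ⟨p, hp⟩ := exists_mvPolynomial_eval_eq_zero_iff_exists_notMem_ker (1 - g (Fin.last d))
    (fun k : Fin d => g k.castSucc - 1) (by rw [← neg_sub, ker_neg]; exact hF _) (fun k => hF _)
  refine ⟨p, fun α => ?_⟩
  rw [← hp]
  refine exists_congr fun b => and_congr ?_ ?_
  · simp only [F, Submodule.mem_iInf, mem_ker, LinearMap.sub_apply, Module.End.one_apply,
      sub_eq_zero, not_forall]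
  · rw [← sub_eq_zero, add_sub_assoc, add_comm]
    simp [LinearMap.sum_apply]

end

/-- For `g₁, …, g_{d+1} ∈ O(n)`, the set of `α ∈ ℝ^d` for which there is a vector
`b`, not fixed by all the `g_k`, with `∑ α_k (g_k b − b) + b = g_{d+1} b`, is either
all of `ℝ^d` or is contained in the zero set of a nonzero polynomial in `α`. -/
theorem stmt8 (d n : ℕ)
    (g : Fin (d + 1) → (EuclideanSpace ℝ (Fin n) ≃ₗᵢ[ℝ] EuclideanSpace ℝ (Fin n))) :
    {α : EuclideanSpace ℝ (Fin d) |
        ∃ b : EuclideanSpace ℝ (Fin n), (∃ k : Fin (d + 1), g k b ≠ b) ∧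
          ∑ k : Fin d, α k • (g k.castSucc b - b) + b = g (Fin.last d) b} = Set.univ ∨
    ∃ p : MvPolynomial (Fin d) ℝ, p ≠ 0 ∧
      {α : EuclideanSpace ℝ (Fin d) |
        ∃ b : EuclideanSpace ℝ (Fin n), (∃ k : Fin (d + 1), g k b ≠ b) ∧
          ∑ k : Fin d, α k • (g k.castSucc b - b) + b = g (Fin.last d) b} ⊆
      {α : EuclideanSpace ℝ (Fin d) | MvPolynomial.eval (fun i => α i) p = 0} := by
  obtain ⟨p, hp⟩ :=
    exists_mvPolynomial_eval_eq_zero_iff_exists_not_fixed (fun k => (g k).toLinearMap)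
  by_cases hp0 : p = 0
  · exact Or.inl (Set.eq_univ_of_forall fun α => (hp (fun i => α i)).2 (by rw [hp0, map_zero]))
  · exact Or.inr ⟨p, hp0, fun α hα => (hp (fun i => α i)).1 hα⟩
end

section
/- Every set of d+1 affinely independent points in ℝ^d (a nondegenerate simplex) is subtransitive: it embeds isometrically into a transitive finite subset of some ℝ^n. -/
/-!
Call a matrix `D` *polygonal* if `D i j = ∑ b, w b * 4 sin² (π (a b i - a b j) / N b)` with
`w ≥ 0`: these are the squared-distance matrices of configurations
`i ↦ (√(w b) · ζ_{N b} ^ (a b i))_b` in a product of regular polygons, and every such configuration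
lies in an orbit of the finite abelian group of coordinatewise rotations, which is transitive.
Polygonal matrices form a convex cone containing the cut semimetrics, and every Euclidean
squared-distance matrix is a limit of polygonal ones: round the coordinates to a fine grid and
wrap each coordinate line around a huge polygon, on which short arcs are almost straight.

For an affinely independent family `x`, the matrix `D i j = ‖x i - x j‖²` is strictly conditionally
negative definite, so for a small `η > 0` the matrix `D - η q` is still a Euclidean
squared-distance matrix (Schoenberg), where `q` is a fixed sum of cut semimetrics in the interior
of the cut cone. Approximating `D - η q` by a polygonal `P` with error `E`, `|E| ≤ η`, the rest
`η q + E` is still a nonnegative combination of cuts, hence `D = P + (η q + E)` is polygonal.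
Finally, a simplex is determined up to isometry by its edge lengths.
-/

/-- A finite set `T ⊆ ℝ^n` is transitive if some group of isometries of `ℝ^n`
preserving `T` acts transitively on `T`. -/
def IsTransitiveSet {n : ℕ} (T : Set (EuclideanSpace ℝ (Fin n))) : Prop :=
  T.Finite ∧ ∀ x ∈ T, ∀ y ∈ T,
    ∃ g : EuclideanSpace ℝ (Fin n) ≃ᵢ EuclideanSpace ℝ (Fin n), g '' T = T ∧ g x = y

open Real Finset

section ConditionallyNegative
variable {ι : Type*} [Fintype ι]

theorem sum_mul_mul_dist_sq {F : Type*} [NormedAddCommGroup F] [InnerProductSpace ℝ F]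
    (p : ι → F) {c : ι → ℝ} (hc : ∑ i, c i = 0) :
    ∑ i, ∑ j, c i * c j * dist (p i) (p j) ^ 2 = -2 * ‖∑ i, c i • p i‖ ^ 2 := by
  have h : ∀ i j, c i * c j * dist (p i) (p j) ^ 2 =
      c i * ‖p i‖ ^ 2 * c j + c i * (c j * ‖p j‖ ^ 2) - 2 * (c i * c j * inner ℝ (p i) (p j)) := by
    intro i j
    rw [dist_eq_norm, norm_sub_sq_real]
    ring
  simp_rw [h, sum_sub_distrib, sum_add_distrib, ← mul_sum, ← sum_mul, hc, mul_zero, zero_mul,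
    ← real_inner_self_eq_norm_sq, sum_inner, inner_sum, real_inner_smul_left,
    real_inner_smul_right]
  simp only [mul_sum, mul_assoc, zero_add, zero_sub, ← sum_neg_distrib, neg_mul]

theorem sum_mul_mul_sub_sq (t : ι → ℝ) {c : ι → ℝ} (hc : ∑ i, c i = 0) :
    ∑ i, ∑ j, c i * c j * (t i - t j) ^ 2 = -2 * (∑ i, c i * t i) ^ 2 := by
  simpa [Real.dist_eq, sq_abs] using sum_mul_mul_dist_sq t hc

theorem AffineIndependent.exists_pos_mul_sum_sq_le {E : Type*} [NormedAddCommGroup E]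
    [NormedSpace ℝ E] {x : ι → E} (hx : AffineIndependent ℝ x) :
    ∃ δ > 0, ∀ c : ι → ℝ, ∑ i, c i = 0 → δ * ∑ i, c i ^ 2 ≤ ‖∑ i, c i • x i‖ ^ 2 := by
  let A : EuclideanSpace ℝ ι →ₗ[ℝ] E × ℝ :=
    ((Fintype.linearCombination ℝ x).prod (Fintype.linearCombination ℝ fun _ => (1 : ℝ))) ∘ₗ
      (WithLp.linearEquiv 2 ℝ (ι → ℝ)).toLinearMap
  have hA : ∀ c, A c = (∑ i, c i • x i, ∑ i, c i) := fun c => by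
    simp [A, Fintype.linearCombination_apply]
  have hker : LinearMap.ker A = ⊥ := by
    refine LinearMap.ker_eq_bot'.mpr fun c hc => ?_
    rw [hA, Prod.mk_eq_zero] at hc
    ext i
    exact hx.eq_zero_of_sum_eq_zero hc.2 hc.1 i (mem_univ i)
  obtain ⟨K, hK0, hK⟩ := A.exists_antilipschitzWith hker
  refine ⟨1 / (K : ℝ) ^ 2, by positivity, fun c hc => ?_⟩
  have hle : ‖WithLp.toLp 2 c‖ ≤ K * ‖∑ i, c i • x i‖ := by
    simpa [hA, hc] using hK.le_mul_dist (WithLp.toLp 2 c) 0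
  have hnorm : ‖WithLp.toLp 2 c‖ ^ 2 = ∑ i, c i ^ 2 := by simp [EuclideanSpace.real_norm_sq_eq]
  rw [← hnorm, div_mul_eq_mul_div, one_mul, div_le_iff₀ (by positivity), ← mul_pow, mul_comm]
  exact pow_le_pow_left₀ (norm_nonneg _) hle 2

end ConditionallyNegative

section Schoenberg
open Matrix
variable {ι : Type*} [Fintype ι]

noncomputable def sqDistGram (D : ι → ι → ℝ) (i₀ : ι) : Matrix ι ι ℝ :=
  of fun i j => (D i i₀ + D j i₀ - D i j) / 2

theorem dotProduct_sqDistGram_mulVec [DecidableEq ι] {D : ι → ι → ℝ} (i₀ : ι)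
    (hsymm : ∀ i j, D i j = D j i) (hdiag : ∀ i, D i i = 0) (v : ι → ℝ) :
    v ⬝ᵥ sqDistGram D i₀ *ᵥ v = -(∑ i, ∑ j, (v i - if i = i₀ then ∑ k, v k else 0) *
      (v j - if j = i₀ then ∑ k, v k else 0) * D i j) / 2 := by
  simp only [sqDistGram, dotProduct, mulVec, of_apply, sub_mul, mul_sub, ite_mul, mul_ite,
    zero_mul, mul_zero, sum_sub_distrib, sum_ite_eq', mem_univ, if_true, sum_ite_irrel,
    sum_const_zero, add_div, sub_div, add_mul, mul_add, sum_add_distrib, hdiag, hsymm i₀, sub_zero]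
  simp only [mul_sum, sum_mul]
  rw [sum_comm (γ := ι) (f := fun x y => v x * (D y i₀ / 2 * v y))]
  simp only [← sum_add_distrib, ← sum_sub_distrib, ← sum_neg_distrib, sum_div]
  exact sum_congr rfl fun x _ => sum_congr rfl fun y _ => by ring

theorem exists_sum_sub_sq_of_sum_mul_mul_nonpos {D : ι → ι → ℝ}
    (hsymm : ∀ i j, D i j = D j i) (hdiag : ∀ i, D i i = 0)
    (hneg : ∀ c : ι → ℝ, ∑ i, c i = 0 → ∑ i, ∑ j, c i * c j * D i j ≤ 0) :
    ∃ u : ι → ι → ℝ, ∀ i j, D i j = ∑ k, (u i k - u j k) ^ 2 := by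
  classical
  rcases isEmpty_or_nonempty ι with hι | ⟨⟨i₀⟩⟩
  · exact ⟨0, fun i => isEmptyElim i⟩
  set G := sqDistGram D i₀ with hG
  have hGpsd : G.PosSemidef := by
    refine .of_dotProduct_mulVec_nonneg ?_ fun v => ?_
    · ext i j
      simp only [hG, sqDistGram, conjTranspose_apply, of_apply, star_trivial, hsymm j i]
      ring
    · rw [star_trivial, dotProduct_sqDistGram_mulVec i₀ hsymm hdiag]
      have := hneg _ (by simp [sum_sub_distrib] :
        ∑ i, (v i - if i = i₀ then ∑ k, v k else 0) = 0)
      linarith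
  open scoped MatrixOrder in
  obtain ⟨S, hS, hSS⟩ : ∃ S : Matrix ι ι ℝ, S.IsHermitian ∧ S * S = G :=
    ⟨CFC.sqrt G, (CFC.sqrt_nonneg G).posSemidef.isHermitian, CFC.sqrt_mul_sqrt_self G hGpsd.nonneg⟩
  have hG_apply : ∀ i j, G i j = ∑ k, S i k * S j k := fun i j => by
    rw [← hSS, mul_apply]
    exact sum_congr rfl fun k _ => by rw [← hS.apply j k, star_trivial]
  refine ⟨S, fun i j => ?_⟩
  have hD : D i j = G i i + G j j - 2 * G i j := by
    simp only [hG, sqDistGram, of_apply, hdiag]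
    ring
  rw [hD, hG_apply, hG_apply, hG_apply, mul_sum, ← sum_add_distrib, ← sum_sub_distrib]
  exact sum_congr rfl fun k _ => by ring

end Schoenberg

section Polygonal
variable {ι : Type*}

def IsPolygonal (D : ι → ι → ℝ) : Prop :=
  ∃ (β : Type) (_ : Fintype β) (N : β → ℕ) (a : β → ι → ℤ) (w : β → ℝ),
    (∀ b, 0 < N b) ∧ (∀ b, 0 ≤ w b) ∧
      ∀ i j, D i j = ∑ b, w b * (4 * sin (π * (a b i - a b j) / N b) ^ 2)

namespace IsPolygonal

variable {D D' : ι → ι → ℝ}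

theorem symm (hD : IsPolygonal D) (i j : ι) : D i j = D j i := by
  obtain ⟨β, _, N, a, w, -, -, hD⟩ := hD
  rw [hD, hD]
  refine sum_congr rfl fun b _ => ?_
  rw [← neg_sub, mul_neg, neg_div, sin_neg, neg_sq]

theorem apply_self (hD : IsPolygonal D) (i : ι) : D i i = 0 := by
  obtain ⟨β, _, N, a, w, -, -, hD⟩ := hD
  simp [hD]

theorem add (hD : IsPolygonal D) (hD' : IsPolygonal D') :
    IsPolygonal fun i j => D i j + D' i j := by
  obtain ⟨β, _, N, a, w, hN, hw, hD⟩ := hD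
  obtain ⟨β', _, N', a', w', hN', hw', hD'⟩ := hD'
  refine ⟨β ⊕ β', inferInstance, Sum.elim N N', Sum.elim a a', Sum.elim w w',
    Sum.forall.mpr ⟨hN, hN'⟩, Sum.forall.mpr ⟨hw, hw'⟩, fun i j => ?_⟩
  simp [hD, hD', Fintype.sum_sum_type]

theorem zero : IsPolygonal fun _ _ : ι => (0 : ℝ) :=
  ⟨Empty, inferInstance, Empty.elim, Empty.elim, Empty.elim, Empty.rec, Empty.rec, by simp⟩

theorem sum {κ : Type*} (s : Finset κ) {D : κ → ι → ι → ℝ} (hD : ∀ k ∈ s, IsPolygonal (D k)) :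
    IsPolygonal fun i j => ∑ k ∈ s, D k i j := by
  classical
  induction s using Finset.induction_on with
  | empty => simpa using zero
  | insert k s hk ih =>
    simp_rw [sum_insert hk]
    exact (hD k (mem_insert_self k s)).add (ih fun l hl => hD l (mem_insert_of_mem hl))

end IsPolygonal

theorem isPolygonal_single {N : ℕ} (hN : 0 < N) (a : ι → ℤ) {w : ℝ} (hw : 0 ≤ w) :
    IsPolygonal fun i j => w * (4 * sin (π * (a i - a j) / N) ^ 2) :=
  ⟨Unit, inferInstance, fun _ => N, fun _ => a, fun _ => w, fun _ => hN, fun _ => hw, by simp⟩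

end Polygonal

section Cuts
variable {ι : Type*} [DecidableEq ι]

def cutSemimetric (s : Finset ι) (i j : ι) : ℝ :=
  ((if i ∈ s then 1 else 0) - (if j ∈ s then 1 else 0)) ^ 2

theorem isPolygonal_cutSemimetric (s : Finset ι) {w : ℝ} (hw : 0 ≤ w) :
    IsPolygonal fun i j => w * cutSemimetric s i j := by
  convert isPolygonal_single two_pos (fun i => if i ∈ s then 1 else 0) (div_nonneg hw zero_le_four)
    using 3 with i j
  by_cases hi : i ∈ s <;> by_cases hj : j ∈ s <;> simp [cutSemimetric, hi, hj, neg_div]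

theorem cutSemimetric_add_sub_pair {k l : ι} (hkl : k ≠ l) (i j : ι) :
    cutSemimetric {k} i j + cutSemimetric {l} i j - cutSemimetric {k, l} i j =
      2 * ((if i = k ∧ j = l then 1 else 0) + (if i = l ∧ j = k then 1 else 0)) := by
  by_cases hik : i = k <;> by_cases hil : i = l <;> by_cases hjk : j = k <;>
    by_cases hjl : j = l <;> simp_all [cutSemimetric] <;> norm_num

variable [Fintype ι]

theorem sum_mul_mul_cutSemimetric (s : Finset ι) {c : ι → ℝ} (hc : ∑ i, c i = 0) :
    ∑ i, ∑ j, c i * c j * cutSemimetric s i j = -2 * (∑ i ∈ s, c i) ^ 2 := by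
  simpa [cutSemimetric, sum_ite_mem] using
    sum_mul_mul_sub_sq (fun i => if i ∈ s then (1 : ℝ) else 0) hc

theorem neg_le_sum_mul_mul_cutSemimetric (s : Finset ι) {c : ι → ℝ} (hc : ∑ i, c i = 0) :
    -(2 * Fintype.card ι) * ∑ i, c i ^ 2 ≤ ∑ i, ∑ j, c i * c j * cutSemimetric s i j := by
  have h : (∑ i ∈ s, c i) ^ 2 ≤ Fintype.card ι * ∑ i, c i ^ 2 :=
    calc (∑ i ∈ s, c i) ^ 2 ≤ s.card * ∑ i ∈ s, c i ^ 2 := sq_sum_le_card_mul_sum_sq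
      _ ≤ Fintype.card ι * ∑ i, c i ^ 2 := by
        gcongr ?_ * ?_
        · exact_mod_cast card_le_univ s
        · exact sum_le_univ_sum_of_nonneg fun i => sq_nonneg (c i)
  rw [sum_mul_mul_cutSemimetric s hc]
  linarith

def pairCutSum (i j : ι) : ℝ :=
  ∑ k, ∑ l, (cutSemimetric {k} i j + cutSemimetric {l} i j + cutSemimetric {k, l} i j)

theorem pairCutSum_comm (i j : ι) : pairCutSum i j = pairCutSum j i := by
  simp only [pairCutSum, cutSemimetric, ← neg_sub (if i ∈ _ then (1 : ℝ) else 0), neg_sq]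

theorem pairCutSum_self (i : ι) : pairCutSum i i = 0 := by
  simp [pairCutSum, cutSemimetric]

theorem neg_le_sum_mul_mul_pairCutSum {c : ι → ℝ} (hc : ∑ i, c i = 0) :
    -(6 * Fintype.card ι ^ 3) * ∑ i, c i ^ 2 ≤ ∑ i, ∑ j, c i * c j * pairCutSum i j := by
  have hsum : ∀ f : ι → ι → ι → ℝ,
      ∑ i, ∑ j, c i * c j * ∑ k, f k i j = ∑ k, ∑ i, ∑ j, c i * c j * f k i j := fun f =>
    calc _ = ∑ i, ∑ k, ∑ j, c i * c j * f k i j := by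
          simp_rw [mul_sum]
          exact sum_congr rfl fun _ _ => sum_comm
      _ = _ := sum_comm
  calc -(6 * Fintype.card ι ^ 3) * ∑ i, c i ^ 2
      = ∑ _k : ι, ∑ _l : ι, 3 * (-(2 * Fintype.card ι) * ∑ i, c i ^ 2) := by
        simp only [sum_const, card_univ, nsmul_eq_mul]
        ring
    _ ≤ ∑ k, ∑ l, (∑ i, ∑ j, c i * c j * cutSemimetric {k} i j +
          ∑ i, ∑ j, c i * c j * cutSemimetric {l} i j +
          ∑ i, ∑ j, c i * c j * cutSemimetric {k, l} i j) := by
        gcongr with k _ l _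
        linarith [neg_le_sum_mul_mul_cutSemimetric {k} hc, neg_le_sum_mul_mul_cutSemimetric {l} hc,
          neg_le_sum_mul_mul_cutSemimetric {k, l} hc]
    _ = ∑ i, ∑ j, c i * c j * pairCutSum i j := by
        simp_rw [pairCutSum, hsum, mul_add, sum_add_distrib]

theorem eq_sum_sum_mul_cutSemimetric {E : ι → ι → ℝ} (hsymm : ∀ i j, E i j = E j i)
    (hdiag : ∀ i, E i i = 0) (i j : ι) :
    E i j = ∑ k, ∑ l, E k l / 4 *
      (cutSemimetric {k} i j + cutSemimetric {l} i j - cutSemimetric {k, l} i j) := by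
  have hterm : ∀ k l, E k l / 4 *
      (cutSemimetric {k} i j + cutSemimetric {l} i j - cutSemimetric {k, l} i j) =
      (if i = k ∧ j = l then E i j / 2 else 0) + (if i = l ∧ j = k then E j i / 2 else 0) := by
    intro k l
    by_cases hkl : k = l
    · subst hkl
      rw [hdiag, zero_div, zero_mul]
      split_ifs with h
      · obtain ⟨rfl, rfl⟩ := h
        simp [hdiag]
      · simp
    · rw [cutSemimetric_add_sub_pair hkl]
      split_ifs with h₁ h₂ h₂
      · exact absurd (h₁.1.symm.trans h₂.1) hkl
      · obtain ⟨rfl, rfl⟩ := h₁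
        ring
      · obtain ⟨rfl, rfl⟩ := h₂
        ring
      · ring
  simp only [hterm, sum_add_distrib, ite_and, sum_ite_eq, sum_ite_irrel, sum_const_zero,
    mem_univ, if_true, hsymm j i]
  ring

theorem isPolygonal_mul_pairCutSum_add {E : ι → ι → ℝ} {δ : ℝ} (hsymm : ∀ i j, E i j = E j i)
    (hdiag : ∀ i, E i i = 0) (hE : ∀ i j, |E i j| ≤ δ) :
    IsPolygonal fun i j => δ * pairCutSum i j + E i j := by
  have hdecomp : (fun i j => δ * pairCutSum i j + E i j) = fun i j => ∑ k, ∑ l,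
      ((δ + E k l / 4) * cutSemimetric {k} i j + (δ + E k l / 4) * cutSemimetric {l} i j +
        (δ - E k l / 4) * cutSemimetric {k, l} i j) := by
    ext i j
    rw [eq_sum_sum_mul_cutSemimetric hsymm hdiag i j, pairCutSum, mul_sum, ← sum_add_distrib]
    simp_rw [mul_sum, ← sum_add_distrib]
    exact sum_congr rfl fun k _ => sum_congr rfl fun l _ => by ring
  rw [hdecomp]
  refine IsPolygonal.sum _ fun k _ => IsPolygonal.sum _ fun l _ => ?_
  have := abs_le.mp (hE k l)
  exact ((isPolygonal_cutSemimetric _ (by linarith)).add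
    (isPolygonal_cutSemimetric _ (by linarith))).add (isPolygonal_cutSemimetric _ (by linarith))

end Cuts

section Approximation
open Filter Topology

theorem tendsto_round_mul_div (s : ℝ) :
    Tendsto (fun n : ℕ => (round (n * s) : ℝ) / n) atTop (𝓝 s) := by
  refine tendsto_iff_norm_sub_tendsto_zero.mpr <|
    squeeze_zero_norm' ?_ tendsto_one_div_atTop_nhds_zero_nat
  filter_upwards [eventually_gt_atTop 0] with n hn
  have hn' : (0 : ℝ) < n := Nat.cast_pos.mpr hn
  have h : (round (n * s) : ℝ) / n - s = ((round (n * s) : ℝ) - n * s) / n := by field_simp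
  rw [norm_norm, Real.norm_eq_abs, h, abs_div, abs_of_pos hn', abs_sub_comm]
  gcongr
  linarith [abs_sub_round ((n : ℝ) * s)]

theorem sq_div_mul_sin_sq_eq (v : ℝ) {r : ℝ} (hr : r ≠ 0) :
    (r / (2 * π)) ^ 2 * (4 * sin (π * v / r) ^ 2) = (v * sinc (π * v / r)) ^ 2 := by
  rcases eq_or_ne v 0 with rfl | hv
  · simp
  rw [sinc_of_ne_zero (by positivity)]
  field_simp
  ring

/-- The grid points `round (n s) / n` and `round (n t) / n` are wrapped around a regular `n²`-gon
of circumradius `n / 2π`, whose arcs of bounded length straighten out as `n → ∞`. -/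
theorem tendsto_sq_mul_sin_sq_round (s t : ℝ) :
    Tendsto (fun n : ℕ => ((n : ℝ) / (2 * π)) ^ 2 *
      (4 * sin (π * ((round (n * s) : ℤ) - (round (n * t) : ℤ) : ℝ) / ((n ^ 2 : ℕ) : ℝ)) ^ 2))
      atTop (𝓝 ((s - t) ^ 2)) := by
  set v : ℕ → ℝ := fun n => (round (n * s) : ℝ) / n - (round (n * t) : ℝ) / n
  have hv : Tendsto v atTop (𝓝 (s - t)) :=
    (tendsto_round_mul_div s).sub (tendsto_round_mul_div t)
  have hsinc : Tendsto (fun n : ℕ => sinc (π * v n / n)) atTop (𝓝 1) := by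
    have h0 : Tendsto (fun n : ℕ => π * v n / n) atTop (𝓝 0) := by
      simpa [div_eq_mul_inv] using (hv.const_mul π).mul tendsto_inv_atTop_nhds_zero_nat
    have h := (continuous_sinc.tendsto 0).comp h0
    rw [sinc_zero] at h
    exact h
  have hlim := (hv.mul hsinc).pow 2
  rw [mul_one] at hlim
  refine hlim.congr' ?_
  filter_upwards [eventually_ne_atTop 0] with n hn
  have hn' : (n : ℝ) ≠ 0 := Nat.cast_ne_zero.mpr hn
  rw [← sq_div_mul_sin_sq_eq (v n) hn']
  congr 4
  simp only [v]
  push_cast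
  field_simp

theorem exists_isPolygonal_abs_sub_sum_sq_le {ι κ : Type*} [Finite ι] [Fintype κ]
    (u : ι → κ → ℝ) {ε : ℝ} (hε : 0 < ε) :
    ∃ P : ι → ι → ℝ, IsPolygonal P ∧ ∀ i j, |P i j - ∑ k, (u i k - u j k) ^ 2| ≤ ε := by
  set P : ℕ → ι → ι → ℝ := fun n i j => ∑ k, ((n : ℝ) / (2 * π)) ^ 2 *
    (4 * sin (π * ((round (n * u i k) : ℤ) - (round (n * u j k) : ℤ) : ℝ) / ((n ^ 2 : ℕ) : ℝ)) ^ 2)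
  have hP : ∀ i j, Tendsto (fun n => P n i j) atTop (𝓝 (∑ k, (u i k - u j k) ^ 2)) := fun i j =>
    tendsto_finsetSum _ fun k _ => tendsto_sq_mul_sin_sq_round (u i k) (u j k)
  have hev : ∀ᶠ n in atTop, 0 < n ∧ ∀ i j, |P n i j - ∑ k, (u i k - u j k) ^ 2| ≤ ε :=
    (eventually_gt_atTop 0).and <| eventually_all.mpr fun i => eventually_all.mpr fun j =>
      (hP i j).eventually (Metric.closedBall_mem_nhds _ hε)
  obtain ⟨n, hn, hclose⟩ := hev.exists
  exact ⟨P n, IsPolygonal.sum _ fun k _ => isPolygonal_single (pow_pos hn 2) _ (by positivity),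
    hclose⟩

end Approximation

theorem norm_toCircle_sub_toCircle_sq {N : ℕ} [NeZero N] (m n : ℤ) :
    ‖(ZMod.toCircle (m : ZMod N) : ℂ) - ZMod.toCircle (n : ZMod N)‖ ^ 2 =
      4 * sin (π * (m - n) / N) ^ 2 := by
  rw [ZMod.toCircle_intCast, ZMod.toCircle_intCast]
  have h : Complex.exp (2 * π * Complex.I * m / N) - Complex.exp (2 * π * Complex.I * n / N) =
      Complex.exp ((2 * π * n / N : ℝ) * Complex.I) *
        (Complex.exp (Complex.I * (2 * π * (m - n) / N : ℝ)) - 1) := by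
    rw [mul_sub, mul_one, ← Complex.exp_add]
    push_cast
    ring_nf
  rw [h, norm_mul, Complex.norm_exp_ofReal_mul_I, one_mul, Complex.norm_exp_I_mul_ofReal_sub_one,
    Real.norm_eq_abs, sq_abs]
  ring_nf

theorem isTransitiveSet_range {G : Type*} [AddGroup G] [Finite G] {n : ℕ}
    (p : G → EuclideanSpace ℝ (Fin n))
    (R : G → EuclideanSpace ℝ (Fin n) ≃ᵢ EuclideanSpace ℝ (Fin n))
    (hR : ∀ g h, R g (p h) = p (g + h)) : IsTransitiveSet (Set.range p) := by
  refine ⟨Set.finite_range p, ?_⟩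
  rintro _ ⟨h, rfl⟩ _ ⟨h', rfl⟩
  refine ⟨R (h' - h), ?_, by rw [hR, sub_add_cancel]⟩
  rw [← Set.range_comp]
  have : R (h' - h) ∘ p = p ∘ (h' - h + ·) := funext (hR _)
  rw [this, (add_left_surjective (h' - h)).range_comp]

theorem IsPolygonal.exists_isTransitiveSet {ι : Type*} {D : ι → ι → ℝ} (hD : IsPolygonal D) :
    ∃ (n : ℕ) (y : ι → EuclideanSpace ℝ (Fin n)) (T : Set (EuclideanSpace ℝ (Fin n))),
      IsTransitiveSet T ∧ (∀ i, y i ∈ T) ∧ ∀ i j, dist (y i) (y j) ^ 2 = D i j := by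
  obtain ⟨β, _, N, a, w, hN, hw, hD⟩ := hD
  have : ∀ b, NeZero (N b) := fun b => ⟨(hN b).ne'⟩
  let V := PiLp 2 fun _ : β => ℂ
  let ψ := (stdOrthonormalBasis ℝ V).repr
  let p : (∀ b, ZMod (N b)) → V := fun z =>
    WithLp.toLp 2 fun b => (√(w b) : ℂ) * ZMod.toCircle (z b)
  let rot : (∀ b, ZMod (N b)) → V ≃ₗᵢ[ℝ] V := fun g =>
    LinearIsometryEquiv.piLpCongrRight 2 fun b => rotation (ZMod.toCircle (g b))
  have hrot : ∀ g z, rot g (p z) = p (g + z) := fun g z => by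
    ext b
    change (ZMod.toCircle (g b) : ℂ) * ((√(w b) : ℂ) * ZMod.toCircle (z b)) =
      (√(w b) : ℂ) * ZMod.toCircle (g b + z b)
    rw [AddChar.map_add_eq_mul, Circle.coe_mul]
    ring
  have hdist : ∀ z z', dist (p z) (p z') ^ 2 =
      ∑ b, w b * ‖(ZMod.toCircle (z b) : ℂ) - ZMod.toCircle (z' b)‖ ^ 2 := fun z z' => by
    rw [PiLp.dist_sq_eq_of_L2]
    refine sum_congr rfl fun b _ => ?_
    simp [p, dist_eq_norm, ← mul_sub, mul_pow, Real.sq_sqrt (hw b)]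
  refine ⟨_, fun i => ψ (p fun b => a b i), Set.range (ψ ∘ p),
    isTransitiveSet_range _ (fun g => (ψ.symm.trans ((rot g).trans ψ)).toIsometryEquiv)
      fun g z => by simp [hrot], fun i => ⟨_, rfl⟩, fun i j => ?_⟩
  rw [LinearIsometryEquiv.dist_map, hdist, hD]
  simp_rw [norm_toCircle_sub_toCircle_sq]

theorem real_inner_sub_sub_eq_dist_sq {G : Type*} [NormedAddCommGroup G] [InnerProductSpace ℝ G]
    (u v w : G) : inner ℝ (u - w) (v - w) = (dist u w ^ 2 + dist v w ^ 2 - dist u v ^ 2) / 2 := by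
  rw [real_inner_eq_norm_mul_self_add_norm_mul_self_sub_norm_sub_mul_self_div_two,
    sub_sub_sub_cancel_right, dist_eq_norm, dist_eq_norm, dist_eq_norm]
  ring

theorem AffineBasis.exists_isometry_apply_eq {ι E F : Type*} [NormedAddCommGroup E]
    [InnerProductSpace ℝ E] [NormedAddCommGroup F] [InnerProductSpace ℝ F]
    (b : AffineBasis ι ℝ E) {y : ι → F} (hy : ∀ i j, dist (y i) (y j) = dist (b i) (b j)) :
    ∃ φ : E → F, Isometry φ ∧ ∀ i, φ (b i) = y i := by
  obtain ⟨i₀⟩ := b.nonempty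
  let B := b.basisOf i₀
  let L := B.constr ℝ fun j => y j - y i₀
  have hLB : ∀ j, L (B j) = y j - y i₀ := B.constr_basis ℝ _
  have hL : (innerₗ F).compl₁₂ L L = innerₗ E :=
    LinearMap.ext_basis B B fun j k => by
      rw [LinearMap.compl₁₂_apply, innerₗ_apply_apply, innerₗ_apply_apply, hLB, hLB,
        b.basisOf_apply, b.basisOf_apply, vsub_eq_sub, vsub_eq_sub, real_inner_sub_sub_eq_dist_sq,
        real_inner_sub_sub_eq_dist_sq, hy, hy, hy]
  let Li := L.isometryOfInner fun u v => congr($hL u v)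
  refine ⟨fun z => Li (z - b i₀) + y i₀, ?_, fun i => ?_⟩
  · exact Isometry.of_dist_eq fun z z' => by
      rw [dist_add_right, Li.dist_map, dist_sub_right]
  · by_cases hi : i = i₀
    · simp [hi]
    · have : b i - b i₀ = B ⟨i, hi⟩ := (b.basisOf_apply i₀ ⟨i, hi⟩).symm
      simp [this, Li, hLB]

theorem AffineIndependent.exists_pos_sum_mul_mul_sub_pairCutSum_nonpos {ι E : Type*} [Fintype ι]
    [DecidableEq ι] [NormedAddCommGroup E] [InnerProductSpace ℝ E] {x : ι → E}
    (hx : AffineIndependent ℝ x) :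
    ∃ η > 0, ∀ c : ι → ℝ, ∑ i, c i = 0 →
      ∑ i, ∑ j, c i * c j * (dist (x i) (x j) ^ 2 - η * pairCutSum i j) ≤ 0 := by
  obtain ⟨δ, hδ, hxδ⟩ := hx.exists_pos_mul_sum_sq_le
  set η := δ / (3 * Fintype.card ι ^ 3 + 1) with hη_def
  have hηδ : η * (6 * Fintype.card ι ^ 3) ≤ 2 * δ := by
    rw [hη_def, div_mul_eq_mul_div, div_le_iff₀ (by positivity)]
    nlinarith
  have hη : 0 < η := by positivity
  refine ⟨η, hη, fun c hc => ?_⟩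
  have hsplit : ∑ i, ∑ j, c i * c j * (dist (x i) (x j) ^ 2 - η * pairCutSum i j) =
      ∑ i, ∑ j, c i * c j * dist (x i) (x j) ^ 2 - η * ∑ i, ∑ j, c i * c j * pairCutSum i j := by
    simp only [mul_sub, sum_sub_distrib, mul_sum, mul_left_comm η]
  have hS : 0 ≤ ∑ i, c i ^ 2 := sum_nonneg fun i _ => sq_nonneg (c i)
  rw [hsplit, sum_mul_mul_dist_sq x hc]
  linarith [hxδ c hc, mul_le_mul_of_nonneg_left (neg_le_sum_mul_mul_pairCutSum hc) hη.le,
    mul_le_mul_of_nonneg_right hηδ hS]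

theorem AffineIndependent.isPolygonal_dist_sq {ι E : Type*} [Fintype ι] [NormedAddCommGroup E]
    [InnerProductSpace ℝ E] {x : ι → E} (hx : AffineIndependent ℝ x) :
    IsPolygonal fun i j => dist (x i) (x j) ^ 2 := by
  classical
  obtain ⟨η, hη, hneg⟩ := hx.exists_pos_sum_mul_mul_sub_pairCutSum_nonpos
  set D : ι → ι → ℝ := fun i j => dist (x i) (x j) ^ 2 - η * pairCutSum i j
  obtain ⟨u, hu⟩ := exists_sum_sub_sq_of_sum_mul_mul_nonpos (D := D)
    (fun i j => by simp [D, dist_comm, pairCutSum_comm]) (fun i => by simp [D, pairCutSum_self])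
    hneg
  obtain ⟨P, hP, hPu⟩ := exists_isPolygonal_abs_sub_sum_sq_le u hη
  have hE : IsPolygonal fun i j => η * pairCutSum i j + (D i j - P i j) :=
    isPolygonal_mul_pairCutSum_add
      (fun i j => by simp [D, dist_comm, pairCutSum_comm, hP.symm i j])
      (fun i => by simp [D, pairCutSum_self, hP.apply_self i])
      fun i j => by rw [hu, abs_sub_comm]; exact hPu i j
  convert hP.add hE using 1
  funext i j
  simp only [D]
  ring

/-- Every set of `d+1` affinely independent points of `ℝ^d` (a nondegenerate
simplex) is subtransitive: it embeds isometrically into a transitive finite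
subset of some `ℝ^n`. -/
theorem stmt16 (d : ℕ) (x : Fin (d + 1) → EuclideanSpace ℝ (Fin d))
    (hx : AffineIndependent ℝ x) :
    ∃ (n : ℕ) (φ : EuclideanSpace ℝ (Fin d) → EuclideanSpace ℝ (Fin n))
      (T : Set (EuclideanSpace ℝ (Fin n))),
      Isometry φ ∧ IsTransitiveSet T ∧ ∀ i, φ (x i) ∈ T := by
  obtain ⟨n, y, T, hT, hyT, hy⟩ := hx.isPolygonal_dist_sq.exists_isTransitiveSet
  have hspan : affineSpan ℝ (Set.range x) = ⊤ :=
    hx.affineSpan_eq_top_iff_card_eq_finrank_add_one.mpr (by simp)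
  obtain ⟨φ, hφ, hφx⟩ := (AffineBasis.mk x hx hspan).exists_isometry_apply_eq (y := y)
    fun i j => (pow_left_inj₀ dist_nonneg dist_nonneg two_ne_zero).mp (hy i j)
  exact ⟨n, φ, T, hφ, hT, fun i => hφx i ▸ hyT i⟩
end
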